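/- arXiv:2102.10173 — 3 statements merged into one kernel-verified Lean document; each statement's English description precedes it below -/
import Mathlib

section
/- Let (b₀,b₁,…) be a sequence of integers such that p⁽ⁿ⁾ → ∞ as n → ∞, and suppose the limit continued fraction [b*₀,b*₁,…] has the same tail as [2,2,2,…] or as [−2,−2,−2,…]. Then the continued fraction [b₀,b₁,…] converges and its value is a rational number. -/
open Filter Topology OnePoint

/-- The Möbius map `z ↦ b - 1/z` on the one-point compactification `ℝ∞` of `ℝ`. -/
noncomputable def mob (b : ℤ) (z : OnePoint ℝ) : OnePoint ℝ :=
  Option.elim z ((b : ℝ) : OnePoint ℝ)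
    (fun x => if x = 0 then (∞ : OnePoint ℝ) else (((b : ℝ) - 1 / x : ℝ) : OnePoint ℝ))

/-- Value of a finite continued fraction `[b₀, …, b_m]`, i.e. `s₀(s₁(⋯ s_m(∞)))`. -/
noncomputable def cfVal : List ℤ → OnePoint ℝ
  | [] => ∞
  | b :: t => mob b (cfVal t)

/-- The `n`th convergent `v_n = S_n(∞)` of the continued fraction `[b₀, b₁, …]`. -/
noncomputable def cfConv (b : ℕ → ℤ) (n : ℕ) : OnePoint ℝ :=
  cfVal ((List.range (n + 1)).map b)

/-- `m` is a positive index at which the coefficient is `0`, `1` or `-1`. -/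
def badIdx (b : ℕ → ℤ) (m : ℕ) : Prop :=
  1 ≤ m ∧ (b m = 0 ∨ b m = 1 ∨ b m = -1)

instance (b : ℕ → ℤ) : DecidablePred (badIdx b) := fun m => by
  unfold badIdx; infer_instance

-- The singularization map `Φ` on integer sequences.
open Classical in
noncomputable def Phi (b : ℕ → ℤ) : ℕ → ℤ :=
  if h : ∃ m, badIdx b m then
    let m := Nat.find h
    if b m = 0 then
      fun k => if k + 1 < m then b k
        else if k = m - 1 then b (m - 1) + b (m + 1)
        else b (k + 2)
    else if b m = 1 then
      fun k => if k + 1 < m then b k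
        else if k = m - 1 then b (m - 1) - 1
        else if k = m then b (m + 1) - 1
        else b (k + 1)
    else
      fun k => if k + 1 < m then b k
        else if k = m - 1 then b (m - 1) + 1
        else if k = m then b (m + 1) + 1
        else b (k + 1)
  else b

-- `p(b) ∈ ℕ ∪ {∞}`: the least positive index at which `0`, `1` or `-1` occurs.
open Classical in
noncomputable def pIdx (b : ℕ → ℤ) : ℕ∞ :=
  if h : ∃ m, badIdx b m then (Nat.find h : ℕ∞) else ⊤

/-- `p⁽ⁿ⁾ → ∞` as `n → ∞`. -/
def PTendsToTop (b : ℕ → ℤ) : Prop :=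
  ∀ N : ℕ, ∃ M : ℕ, ∀ n ≥ M, (N : ℕ∞) < pIdx (Phi^[n] b)

/-- `p = liminf pⁿ`, as a natural number (junk value if the liminf is `∞`). -/
noncomputable def pLim (b : ℕ → ℤ) : ℕ :=
  (Filter.liminf (fun n => pIdx (Phi^[n] b)) Filter.atTop).toNat

/-- `q⁽ⁿ⁾ = |b⁽ⁿ⁾_{p-1}|`. -/
noncomputable def qSeq (b : ℕ → ℤ) (n : ℕ) : ℕ :=
  ((Phi^[n] b) (pLim b - 1)).natAbs

/-- Two continued fractions have the same tail. -/
def SameTail (b c : ℕ → ℤ) : Prop := ∃ r s : ℕ, ∀ k : ℕ, b (r + k) = c (s + k)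

/-- `bstar` is the limit continued fraction: each coefficient of `Φⁿ(b)` stabilises on it. -/
def EventuallyCoeff (b bstar : ℕ → ℤ) : Prop :=
  ∀ k : ℕ, ∃ N : ℕ, ∀ n ≥ N, Phi^[n] b k = bstar k

/-- The point of `ℝ∞` represented by the integer fraction `a/b` (`∞` when `b = 0`). -/
noncomputable def intPt (a b : ℤ) : OnePoint ℝ :=
  if b = 0 then ∞ else (((a : ℝ) / (b : ℝ)) : OnePoint ℝ)

/-- Adjacency in the Farey graph: `x = a/b`, `y = c/d` with `ad - bc = ±1`. -/
def FareyAdj (x y : OnePoint ℝ) : Prop :=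
  ∃ a b c d : ℤ, x = intPt a b ∧ y = intPt c d ∧
    (a * d - b * c = 1 ∨ a * d - b * c = -1)

/-- `x` is an extended rational, i.e. a member of `ℚ∞ = ℚ ∪ {∞} ⊆ ℝ∞`. -/
def IsExtRat (x : OnePoint ℝ) : Prop :=
  x = ∞ ∨ ∃ q : ℚ, x = ((q : ℝ) : OnePoint ℝ)

-- One step of the index-tracking sequence, for the current coefficient sequence `c`.
open Classical in
noncomputable def eStep (c : ℕ → ℤ) (e : ℕ) : Option ℕ :=
  if h : ∃ m, badIdx c m then
    let m := Nat.find h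
    if c m = 0 then
      if e + 2 ≤ m then Option.some e
      else if e = m - 1 ∨ e = m then (none : Option ℕ)
      else Option.some (e - 2)
    else
      if e + 2 ≤ m then Option.some e
      else if e = m - 1 then (none : Option ℕ)
      else Option.some (e - 1)
  else Option.some e

/-- The index-tracking sequence `e⁽⁰⁾(k), e⁽¹⁾(k), …` (`none` once it has terminated). -/
noncomputable def eSeq (b : ℕ → ℤ) (k : ℕ) : ℕ → Option ℕ
  | 0 => Option.some k
  | n + 1 => (eSeq b k n).bind (eStep (Phi^[n] b))

/-!
Each Möbius map `s_b` is the action of the matrix `!![b, -1; 1, 0]` of `GL(2, ℝ)` on `ℝ∞`, so one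
step of `Φ` leaves the convergents unchanged (up to a shift of index) because of the matrix
identities `s_a s_0 s_d = s_{a+d}` and `s_a s_{±1} s_d = s_{a∓1} s_{d∓1}`. Following the index of a
convergent `v_N` through the iterates `Φⁿ(b)`, either it is removed at some step or it survives until
the first `N + 1` coefficients are frozen; in both cases, for `N` large, `v_N = S*_ℓ(z)` for a point
`z` obtained from `∞` by maps `s_c` with `|c| ≥ 2`, and these preserve `{∞} ∪ {|x| ≥ 1}`.

If `b*` ends with the constant coefficient `2ε` (`ε = ±1`), the `j`-fold iterate of `s_{2ε}` maps
`{∞} ∪ {|x| ≥ 1}` into `ε · [1, 1 + 2/j]`, which shrinks to the parabolic fixed point `ε`. Hence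
`v_N` tends to `S*_ℓ(ε)`, which is finite and, as the value of a finite integer continued fraction at
a rational point, rational.
-/

namespace OnePoint

variable {K : Type*} [Field K] [DecidableEq K]

theorem neg_smul_eq_smul (g : GL (Fin 2) K) (z : OnePoint K) : (-g) • z = g • z := by
  cases z with
  | infty => simp [smul_infty_eq_ite, neg_div_neg_eq]
  | coe x =>
    simp only [smul_some_eq_ite, Units.val_neg, Matrix.neg_apply, neg_mul, ← neg_add,
      neg_eq_zero, neg_div_neg_eq]

theorem continuousAt_smul_coe [TopologicalSpace K] [IsTopologicalDivisionRing K] [T1Space K]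
    (g : GL (Fin 2) K) {x₀ : K} (h : g • (x₀ : OnePoint K) ≠ ∞) :
    ContinuousAt (fun x : K => g • (x : OnePoint K)) x₀ := by
  have hden : ContinuousAt (fun x => g 1 0 * x + g 1 1) x₀ := by fun_prop
  have h0 : g 1 0 * x₀ + g 1 1 ≠ 0 := fun h0 => h (by simp [smul_some_eq_ite, h0])
  have heq : (fun x : K => ((g 0 0 * x + g 0 1) / (g 1 0 * x + g 1 1) : OnePoint K)) =ᶠ[𝓝 x₀]
      fun x : K => g • (x : OnePoint K) := by
    filter_upwards [hden.eventually_ne h0] with x hx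
    simp [smul_some_eq_ite, hx]
  exact (continuous_coe.continuousAt.comp (ContinuousAt.div (by fun_prop) hden h0)).congr heq

end OnePoint

theorem tendsto_of_eventually_mem_image {X Y ι : Type*} [TopologicalSpace X] [TopologicalSpace Y]
    {F : X → Y} {x₀ : X} (hF : ContinuousAt F x₀) {u : ι → Y} {l : Filter ι}
    (h : ∀ V ∈ 𝓝 x₀, ∀ᶠ i in l, u i ∈ F '' V) : Tendsto u l (𝓝 (F x₀)) := fun U hU => by
  filter_upwards [h _ (hF hU)] with i ⟨x, hx, hxi⟩
  exact hxi ▸ hx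

theorem mob_infty (b : ℤ) : mob b ∞ = (b : ℝ) := rfl

theorem mob_coe (b : ℤ) (x : ℝ) :
    mob b x = if x = 0 then ∞ else ((b - 1 / x : ℝ) : OnePoint ℝ) :=
  rfl

noncomputable def mobMat (b : ℤ) : GL (Fin 2) ℝ :=
  .mkOfDetNeZero !![(b : ℝ), -1; 1, 0] (by simp [Matrix.det_fin_two])

theorem mob_eq_smul (b : ℤ) (z : OnePoint ℝ) : mob b z = mobMat b • z := by
  cases z with
  | infty => simp [mob_infty, mobMat, smul_infty_eq_ite]
  | coe x =>
    by_cases hx : x = 0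
    · simp [mob_coe, mobMat, smul_some_eq_ite, hx]
    · simp [mob_coe, mobMat, smul_some_eq_ite, hx]
      field_simp
      ring

theorem mob_mob_zero_mob (a d : ℤ) (z : OnePoint ℝ) :
    mob a (mob 0 (mob d z)) = mob (a + d) z := by
  have hM : mobMat a * mobMat 0 * mobMat d = -mobMat (a + d) := by
    ext i j
    fin_cases i <;> fin_cases j <;> simp [mobMat, Matrix.mul_apply, Fin.sum_univ_two]
  simp only [mob_eq_smul, ← mul_smul, ← mul_assoc, hM, OnePoint.neg_smul_eq_smul]

theorem mob_mob_unit_mob {ε : ℤ} (hε : ε = 1 ∨ ε = -1) (a d : ℤ) (z : OnePoint ℝ) :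
    mob a (mob ε (mob d z)) = mob (a - ε) (mob (d - ε) z) := by
  simp only [mob_eq_smul, ← mul_smul, ← mul_assoc]
  rcases hε with rfl | rfl
  · congr 1
    ext i j
    fin_cases i <;> fin_cases j <;> simp [mobMat, Matrix.mul_apply, Fin.sum_univ_two] <;> ring
  · rw [← OnePoint.neg_smul_eq_smul]
    congr 1
    ext i j
    fin_cases i <;> fin_cases j <;> simp [mobMat, Matrix.mul_apply, Fin.sum_univ_two] <;> ring

theorem mob_mob_unit_infty {ε : ℤ} (hε : ε = 1 ∨ ε = -1) (a : ℤ) :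
    mob a (mob ε ∞) = mob (a - ε) ∞ := by
  rcases hε with rfl | rfl <;> norm_num [mob_infty, mob_coe]

theorem mob_mob_zero_infty (a : ℤ) : mob a (mob 0 ∞) = ∞ := by
  simp [mob_infty, mob_coe]

-- `cfMap g n` is the paper's `S_{n-1} = s_{g 0} ∘ ⋯ ∘ s_{g (n-1)}`.
noncomputable def cfMap (g : ℕ → ℤ) (n : ℕ) (z : OnePoint ℝ) : OnePoint ℝ :=
  ((List.range n).map g).foldr mob z

theorem cfConv_eq_cfMap (g : ℕ → ℤ) (n : ℕ) : cfConv g n = cfMap g (n + 1) ∞ := by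
  suffices ∀ l : List ℤ, cfVal l = l.foldr mob ∞ from this _
  intro l
  induction l with
  | nil => rfl
  | cons b l ih => simp [cfVal, ih]

@[simp] theorem cfMap_zero (g : ℕ → ℤ) (z : OnePoint ℝ) : cfMap g 0 z = z := rfl

theorem cfMap_add (g : ℕ → ℤ) (a n : ℕ) (z : OnePoint ℝ) :
    cfMap g (a + n) z = cfMap g a (cfMap (fun j => g (a + j)) n z) := by
  simp [cfMap, List.range_add, List.foldr_append, Function.comp_def]

theorem cfMap_succ (g : ℕ → ℤ) (n : ℕ) (z : OnePoint ℝ) :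
    cfMap g (n + 1) z = cfMap g n (mob (g n) z) := by
  rw [cfMap_add]
  rfl

theorem cfMap_succ' (g : ℕ → ℤ) (n : ℕ) (z : OnePoint ℝ) :
    cfMap g (n + 1) z = mob (g 0) (cfMap (fun j => g (j + 1)) n z) := by
  rw [add_comm, cfMap_add]
  simp [cfMap, add_comm]

theorem cfMap_congr {g g' : ℕ → ℤ} {n : ℕ} (h : ∀ k < n, g k = g' k) :
    cfMap g n = cfMap g' n := by
  ext z
  simp only [cfMap]
  rw [List.map_congr_left fun k hk => h k (List.mem_range.mp hk)]

theorem cfMap_eq_smul (g : ℕ → ℤ) (n : ℕ) (z : OnePoint ℝ) :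
    cfMap g n z = ((List.range n).map (mobMat ∘ g)).prod • z := by
  rw [cfMap, ← List.map_map]
  generalize (List.range n).map g = l
  induction l with
  | nil => simp
  | cons b l ih => simp [ih, mob_eq_smul, mul_smul]

theorem mapsTo_cfMap {g : ℕ → ℤ} {n : ℕ} {s : Set (OnePoint ℝ)}
    (h : ∀ k < n, Set.MapsTo (mob (g k)) s s) : Set.MapsTo (cfMap g n) s s := by
  induction n with
  | zero => exact Set.mapsTo_id s
  | succ n ih =>
    simp only [funext (cfMap_succ g n)]
    exact (ih fun k hk => h k (by omega)).comp (h n (by omega))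

theorem isExtRat_mob (b : ℤ) {z : OnePoint ℝ} (hz : IsExtRat z) : IsExtRat (mob b z) := by
  rcases hz with rfl | ⟨q, rfl⟩
  · exact Or.inr ⟨b, by simp [mob_infty]⟩
  · by_cases hq : q = 0
    · left
      simp [mob_coe, hq]
    · right
      exact ⟨b - 1 / q, by simp [mob_coe, hq]⟩

theorem isExtRat_cfMap (g : ℕ → ℤ) (n : ℕ) {z : OnePoint ℝ} (hz : IsExtRat z) :
    IsExtRat (cfMap g n z) :=
  mapsTo_cfMap (s := {z | IsExtRat z}) (fun k _ _ hz => isExtRat_mob (g k) hz) hz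

def unitExterior : Set (OnePoint ℝ) := (↑) '' {x : ℝ | 1 ≤ |x|}

theorem mob_mem_unitExterior {b : ℤ} (hb : 2 ≤ |b|) {z : OnePoint ℝ}
    (hz : z ∈ insert ∞ unitExterior) : mob b z ∈ unitExterior := by
  have hb' : (2 : ℝ) ≤ |(b : ℝ)| := by exact_mod_cast hb
  rcases hz with rfl | ⟨x, hx, rfl⟩
  · exact ⟨b, show (1 : ℝ) ≤ |(b : ℝ)| by linarith, rfl⟩
  · have hx0 : x ≠ 0 := by rintro rfl; norm_num at hx
    have hinv : |1 / x| ≤ 1 := by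
      rw [abs_div, abs_one, div_le_one (abs_pos.mpr hx0)]
      exact hx
    refine ⟨b - 1 / x, ?_, by simp [mob_coe, hx0]⟩
    calc (1 : ℝ) ≤ |(b : ℝ)| - |1 / x| := by linarith
      _ ≤ |b - 1 / x| := abs_sub_abs_le_abs_sub _ _

theorem mob_ne_infty_of_mem_unitExterior (b : ℤ) {z : OnePoint ℝ} (hz : z ∈ unitExterior) :
    mob b z ≠ ∞ := by
  obtain ⟨x, hx, rfl⟩ := hz
  have hx0 : x ≠ 0 := by rintro rfl; norm_num at hx
  simp [mob_coe, hx0]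

theorem cfMap_succ_ne_infty {g : ℕ → ℤ} {n : ℕ} (hg : ∀ k, 1 ≤ k → k ≤ n → 2 ≤ |g k|)
    {z : OnePoint ℝ} (hz : z ∈ unitExterior) : cfMap g (n + 1) z ≠ ∞ := by
  rw [cfMap_succ']
  refine mob_ne_infty_of_mem_unitExterior _ (mapsTo_cfMap (fun k hk w hw => ?_) hz)
  exact mob_mem_unitExterior (hg (k + 1) (by omega) (by omega)) (Set.subset_insert _ _ hw)

theorem cfConv_mem_image_of_two_le_abs {c : ℕ → ℤ} {ℓ e : ℕ} (hℓ : ℓ ≤ e + 1)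
    (hc : ∀ k, ℓ ≤ k → k ≤ e → 2 ≤ |c k|) :
    cfConv c e ∈ cfMap c ℓ '' insert ∞ unitExterior := by
  rw [cfConv_eq_cfMap, show e + 1 = ℓ + (e + 1 - ℓ) by omega, cfMap_add]
  refine ⟨_, mapsTo_cfMap (fun k hk z hz => ?_) (Set.mem_insert _ _), rfl⟩
  exact Set.subset_insert _ _ (mob_mem_unitExterior (hc _ (by omega) (by omega)) hz)

theorem cfConv_add_two_of_eq_zero {c : ℕ → ℤ} {n : ℕ} (h : c (n + 2) = 0) :
    cfConv c (n + 2) = cfConv c n := by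
  simp only [cfConv_eq_cfMap, cfMap_succ, h, mob_mob_zero_infty]

section Singularization

variable {c c' : ℕ → ℤ} {p : ℕ}

theorem two_le_abs_of_not_badIdx {k : ℕ} (hk : 1 ≤ k) (h : ¬badIdx c k) : 2 ≤ |c k| := by
  simp only [badIdx, not_and, not_or] at h
  obtain ⟨h0, h1, h2⟩ := h hk
  rw [le_abs]
  omega

theorem Phi_of_not_exists (h : ¬∃ m, badIdx c m) : Phi c = c := dif_neg h

theorem Phi_apply_of_lt (h : ∃ m, badIdx c m) {k : ℕ} (hk : k + 1 < Nat.find h) :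
    Phi c k = c k := by
  simp only [Phi, dif_pos h]
  split_ifs <;> simp [hk]

theorem Phi_apply_of_eq_zero (h : ∃ m, badIdx c m) (hp : Nat.find h = p + 1)
    (h0 : c (p + 1) = 0) : Phi c p = c p + c (p + 2) ∧ ∀ k, Phi c (p + 1 + k) = c (p + 3 + k) := by
  simp only [Phi, dif_pos h, hp, h0, if_true, Nat.add_sub_cancel]
  refine ⟨by simp, fun k => ?_⟩
  rw [if_neg (by omega), if_neg (by omega)]
  congr 1
  omega

theorem Phi_apply_of_eq_unit (h : ∃ m, badIdx c m) (hp : Nat.find h = p + 1)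
    (hε : c (p + 1) = 1 ∨ c (p + 1) = -1) :
    Phi c p = c p - c (p + 1) ∧ Phi c (p + 1) = c (p + 2) - c (p + 1) ∧
      ∀ k, Phi c (p + 2 + k) = c (p + 3 + k) := by
  have hne : c (p + 1) ≠ 0 := by omega
  simp only [Phi, dif_pos h, hp, if_neg hne, Nat.add_sub_cancel]
  rcases hε with hε | hε <;> simp only [hε, if_true, if_false, (by decide : (-1 : ℤ) ≠ 1)] <;>
    refine ⟨by simp, by simp, fun k => ?_⟩ <;>
    rw [if_neg (by omega), if_neg (by omega), if_neg (by omega)] <;> congr 1 <;> omega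

theorem cfConv_singularize_zero (hlt : ∀ k < p, c' k = c k) (h0 : c (p + 1) = 0)
    (hmid : c' p = c p + c (p + 2)) (htail : ∀ k, c' (p + 1 + k) = c (p + 3 + k)) (n : ℕ) :
    cfConv c (p + 2 + n) = cfConv c' (p + n) := by
  rw [cfConv_eq_cfMap, cfConv_eq_cfMap, show p + 2 + n + 1 = p + 3 + n by omega,
    show p + n + 1 = p + 1 + n by omega, cfMap_add c, cfMap_add c', funext htail]
  simp only [cfMap_succ, h0, mob_mob_zero_mob, ← hmid, cfMap_congr hlt]

theorem cfConv_singularize_unit (hlt : ∀ k < p, c' k = c k)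
    (hε : c (p + 1) = 1 ∨ c (p + 1) = -1)
    (hmid : c' p = c p - c (p + 1)) (hnext : c' (p + 1) = c (p + 2) - c (p + 1))
    (htail : ∀ k, c' (p + 2 + k) = c (p + 3 + k)) (n : ℕ) :
    cfConv c (p + 1 + n) = cfConv c' (p + n) := by
  rcases n with _ | n
  · simp only [cfConv_eq_cfMap, cfMap_succ, mob_mob_unit_infty hε, ← hmid, cfMap_congr hlt]
  · rw [cfConv_eq_cfMap, cfConv_eq_cfMap, show p + 1 + (n + 1) + 1 = p + 3 + n by omega,
      show p + (n + 1) + 1 = p + 2 + n by omega, cfMap_add c, cfMap_add c', funext htail]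
    simp only [cfMap_succ, mob_mob_unit_mob hε, ← hmid, ← hnext, cfMap_congr hlt]

end Singularization

section IndexTracking

variable {b c : ℕ → ℤ} {N n e e' : ℕ}

theorem cfConv_eq_of_eStep (hs : eStep c e = Option.some e') : cfConv c e = cfConv (Phi c) e' := by
  by_cases h : ∃ m, badIdx c m
  swap
  · simp only [eStep, dif_neg h, Option.some.injEq] at hs
    rw [Phi_of_not_exists h, hs]
  obtain ⟨p, hp⟩ : ∃ p, Nat.find h = p + 1 := Nat.exists_eq_add_of_le' (Nat.find_spec h).1
  have hlt : ∀ k, k < p → Phi c k = c k := fun k hk => Phi_apply_of_lt h (by omega)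
  simp only [eStep, dif_pos h, hp] at hs
  by_cases hsmall : e + 2 ≤ p + 1
  · obtain rfl : e' = e := by split_ifs at hs <;> simp_all
    simp only [cfConv_eq_cfMap]
    exact congrFun (cfMap_congr fun k hk => (hlt k (by omega)).symm) ∞
  rcases (Nat.find_spec h).2 with h0 | hε
  · rw [hp] at h0
    rw [if_pos h0, if_neg hsmall] at hs
    split_ifs at hs with hne
    obtain ⟨n, rfl⟩ : ∃ n, e = p + 2 + n := ⟨e - (p + 2), by omega⟩
    obtain ⟨hmid, htail⟩ := Phi_apply_of_eq_zero h hp h0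
    rw [← Option.some_inj.mp hs, show p + 2 + n - 2 = p + n by omega]
    exact cfConv_singularize_zero hlt h0 hmid htail n
  · rw [hp] at hε
    rw [if_neg (by omega), if_neg hsmall] at hs
    split_ifs at hs with hne
    obtain ⟨n, rfl⟩ : ∃ n, e = p + 1 + n := ⟨e - (p + 1), by omega⟩
    obtain ⟨hmid, hnext, htail⟩ := Phi_apply_of_eq_unit h hp hε
    rw [← Option.some_inj.mp hs, show p + 1 + n - 1 = p + n by omega]
    exact cfConv_singularize_unit hlt hε hmid hnext htail n

theorem eStep_bounds (hs : eStep c e = Option.some e') :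
    e' ≤ e ∧ e ≤ e' + 2 ∧ (e' = e ∨ ∃ h : ∃ m, badIdx c m, Nat.find h ≤ e' + 1) := by
  unfold eStep at hs
  by_cases h : ∃ m, badIdx c m
  · simp only [dif_pos h] at hs
    split_ifs at hs <;> simp only [Option.some.injEq] at hs <;> subst hs <;>
      exact ⟨by omega, by omega, by first | exact Or.inl rfl | exact Or.inr ⟨h, by omega⟩⟩
  · simp only [dif_neg h, Option.some.injEq] at hs
    exact ⟨hs.ge, by omega, Or.inl hs.symm⟩

theorem eStep_eq_none (hs : eStep c e = none) :
    ∃ h : ∃ m, badIdx c m, e + 1 = Nat.find h ∨ (e = Nat.find h ∧ c e = 0) := by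
  unfold eStep at hs
  by_cases h : ∃ m, badIdx c m
  · have hm := (Nat.find_spec h).1
    simp only [dif_pos h] at hs
    refine ⟨h, ?_⟩
    split_ifs at hs with h0 _ hmid <;> simp only at hs
    · rcases hmid with hmid | rfl
      · exact Or.inl (by omega)
      · exact Or.inr ⟨rfl, h0⟩
    · exact Or.inl (by omega)
  · simp [dif_neg h] at hs

theorem eSeq_succ_of_eq_some (h : eSeq b N n = Option.some e) :
    eSeq b N (n + 1) = eStep (Phi^[n] b) e := by
  simp [eSeq, h]

theorem eSeq_spec (h : eSeq b N n = Option.some e) :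
    e ≤ N ∧ cfConv b N = cfConv (Phi^[n] b) e := by
  induction n generalizing e with
  | zero =>
    obtain rfl : N = e := Option.some_inj.mp h
    exact ⟨le_rfl, rfl⟩
  | succ n ih =>
    cases hn : eSeq b N n with
    | none => simp [eSeq, hn] at h
    | some e₀ =>
      rw [eSeq_succ_of_eq_some hn] at h
      obtain ⟨he₀, hconv⟩ := ih hn
      rw [hconv, cfConv_eq_of_eStep h, Function.iterate_succ_apply']
      exact ⟨(eStep_bounds h).1.trans he₀, rfl⟩

theorem eventually_eSeq_eq_some (b : ℕ → ℤ) (n : ℕ) :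
    ∀ᶠ N in atTop, ∃ e, eSeq b N n = Option.some e ∧ N ≤ e + 2 * n := by
  induction n with
  | zero => exact Eventually.of_forall fun N => ⟨N, rfl, le_rfl⟩
  | succ n ih =>
    filter_upwards [ih, eventually_gt_atTop ((pIdx (Phi^[n] b)).toNat + 2 * n)]
      with N ⟨e, he, hNe⟩ hN
    rw [eSeq_succ_of_eq_some he]
    cases hs : eStep (Phi^[n] b) e with
    | none =>
      obtain ⟨h, hm⟩ := eStep_eq_none hs
      simp only [pIdx, dif_pos h, ENat.toNat_natCast] at hN
      omega
    | some e' => exact ⟨e', rfl, by have := (eStep_bounds hs).2.1; omega⟩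

end IndexTracking

theorem cfConv_mem_image_of_lt_badIdx {c : ℕ → ℤ} {ℓ e : ℕ} (hℓ₁ : 1 ≤ ℓ) (hℓ : ℓ ≤ e + 1)
    (he : ∀ m, badIdx c m → e < m) : cfConv c e ∈ cfMap c ℓ '' insert ∞ unitExterior :=
  cfConv_mem_image_of_two_le_abs hℓ fun k hk hke =>
    two_le_abs_of_not_badIdx (by omega) fun hbad => (he k hbad).not_ge hke

theorem cfConv_mem_image_of_eStep_eq_none {c : ℕ → ℤ} {ℓ e : ℕ} (hℓ₁ : 1 ≤ ℓ)
    (hℓ : ∀ m, badIdx c m → ℓ < m) (hs : eStep c e = none) :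
    cfConv c e ∈ cfMap c ℓ '' insert ∞ unitExterior := by
  obtain ⟨h, he⟩ := eStep_eq_none hs
  have hℓm := hℓ _ (Nat.find_spec h)
  rcases he with he | ⟨he, h0⟩
  · exact cfConv_mem_image_of_lt_badIdx hℓ₁ (by omega) fun m hm => by
      have := Nat.find_min' h hm; omega
  · obtain ⟨n, rfl⟩ : ∃ n, e = n + 2 := ⟨e - 2, by omega⟩
    rw [cfConv_add_two_of_eq_zero h0]
    exact cfConv_mem_image_of_lt_badIdx hℓ₁ (by omega) fun m hm => by
      have := Nat.find_min' h hm; omega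

section LimitSequence

variable {b bstar : ℕ → ℤ}

theorem eventually_forall_badIdx_gt (hp : PTendsToTop b) (N : ℕ) :
    ∀ᶠ n in atTop, ∀ m, badIdx (Phi^[n] b) m → N < m := by
  filter_upwards [eventually_atTop.mpr (hp N)] with n hn m hm
  have h : ∃ m, badIdx (Phi^[n] b) m := ⟨m, hm⟩
  simp only [pIdx, dif_pos h, Nat.cast_lt] at hn
  exact hn.trans_le (Nat.find_min' h hm)

theorem two_le_abs_bstar (hp : PTendsToTop b) (hb : EventuallyCoeff b bstar) {k : ℕ}
    (hk : 1 ≤ k) : 2 ≤ |bstar k| := by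
  obtain ⟨n, hbad, hn⟩ :=
    ((eventually_forall_badIdx_gt hp k).and (eventually_atTop.mpr (hb k))).exists
  exact hn ▸ two_le_abs_of_not_badIdx hk fun h => (hbad k h).false

theorem eventually_cfConv_mem_image (hp : PTendsToTop b) (hb : EventuallyCoeff b bstar) {ℓ : ℕ}
    (hℓ : 1 ≤ ℓ) : ∀ᶠ N in atTop, cfConv b N ∈ cfMap bstar ℓ '' insert ∞ unitExterior := by
  have hprefix : ∀ᶠ n in atTop, cfMap (Phi^[n] b) ℓ = cfMap bstar ℓ := by
    filter_upwards [(eventually_all_finset (Finset.range ℓ)).mpr fun k _ =>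
      eventually_atTop.mpr (hb k)] with n hn
    exact cfMap_congr fun k hk => hn k (Finset.mem_range.mpr hk)
  obtain ⟨n₀, hn₀⟩ := eventually_atTop.mp ((eventually_forall_badIdx_gt hp ℓ).and hprefix)
  filter_upwards [eventually_eSeq_eq_some b n₀, eventually_ge_atTop (ℓ + 2 * n₀)]
    with N ⟨e₀, he₀, hNe₀⟩ hN
  have key : ∀ n ≥ n₀, cfConv b N ∈ cfMap bstar ℓ '' insert ∞ unitExterior ∨
      ∃ e, eSeq b N n = Option.some e ∧ ℓ ≤ e + 1 := by
    intro n hn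
    induction n, hn using Nat.le_induction with
    | base => exact Or.inr ⟨e₀, he₀, by omega⟩
    | succ n hn ih =>
      obtain hmem | ⟨e, he, hℓe⟩ := ih
      · exact Or.inl hmem
      obtain ⟨hbad, hpre⟩ := hn₀ n hn
      rw [eSeq_succ_of_eq_some he]
      cases hs : eStep (Phi^[n] b) e with
      | none =>
        rw [(eSeq_spec he).2, ← hpre]
        exact Or.inl (cfConv_mem_image_of_eStep_eq_none hℓ hbad hs)
      | some e' =>
        refine Or.inr ⟨e', rfl, ?_⟩
        obtain rfl | ⟨h, hle⟩ := (eStep_bounds hs).2.2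
        · exact hℓe
        · have := hbad _ (Nat.find_spec h)
          omega
  obtain ⟨n, hnN, hn⟩ :=
    ((eventually_forall_badIdx_gt hp N).and (eventually_ge_atTop n₀)).exists
  obtain hmem | ⟨e, he, hℓe⟩ := key n hn
  · exact hmem
  obtain ⟨heN, hconv⟩ := eSeq_spec he
  rw [hconv, ← (hn₀ n hn).2]
  exact cfConv_mem_image_of_lt_badIdx hℓ hℓe fun m hm => heN.trans_lt (hnN m hm)

end LimitSequence

theorem two_sub_inv_mem_Icc {u : ℝ} (j : ℕ) (hu : u ∈ Set.Icc (1 : ℝ) (1 + 2 / (j + 1))) :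
    2 - 1 / u ∈ Set.Icc (1 : ℝ) (1 + 2 / (j + 1 + 1)) := by
  obtain ⟨hu1, hu2⟩ := hu
  have hu0 : 0 < u := by linarith
  constructor
  · have : 1 / u ≤ 1 := by rw [div_le_one hu0]; exact hu1
    linarith
  · have hj : (j + 1) * u ≤ j + 3 := by
      have := mul_le_mul_of_nonneg_left hu2 (by positivity : (0 : ℝ) ≤ j + 1)
      field_simp at this
      linarith
    field_simp
    nlinarith

theorem two_sub_inv_mem_Icc_of_one_le_abs {u : ℝ} (hu : 1 ≤ |u|) :
    2 - 1 / u ∈ Set.Icc (1 : ℝ) 3 := by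
  have : |1 / u| ≤ 1 := by
    rw [abs_div, abs_one, div_le_one (by linarith)]
    exact hu
  constructor <;> linarith [(abs_le.mp this).1, (abs_le.mp this).2]

theorem mob_two_mul_coe_mul {ε : ℤ} (hε : ε = 1 ∨ ε = -1) {u : ℝ} (hu : u ≠ 0) :
    mob (2 * ε) ((ε * u : ℝ) : OnePoint ℝ) = ((ε * (2 - 1 / u) : ℝ) : OnePoint ℝ) := by
  rcases hε with rfl | rfl
  · simp [mob_coe, hu]
  · simp [mob_coe, hu]
    ring

theorem cfMap_const_mem {ε : ℤ} (hε : ε = 1 ∨ ε = -1) (j : ℕ) {z : OnePoint ℝ}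
    (hz : z ∈ insert ∞ unitExterior) :
    cfMap (fun _ => 2 * ε) (j + 1) z ∈
      (fun u : ℝ => ((ε * u : ℝ) : OnePoint ℝ)) '' Set.Icc (1 : ℝ) (1 + 2 / (j + 1)) := by
  induction j with
  | zero =>
    have hεε : (ε : ℝ) * ε = 1 := by rcases hε with rfl | rfl <;> norm_num
    have habs : |(ε : ℝ)| = 1 := by rcases hε with rfl | rfl <;> norm_num
    rw [cfMap_succ', cfMap_zero, show (1 : ℝ) + 2 / ((0 : ℕ) + 1 : ℝ) = 3 by norm_num]
    rcases hz with rfl | ⟨x, hx, rfl⟩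
    · exact ⟨2, by norm_num, by simp [mob_infty, mul_comm]⟩
    · have hεx : 1 ≤ |(ε : ℝ) * x| := by rwa [abs_mul, habs, one_mul]
      rw [show x = ε * (ε * x) by rw [← mul_assoc, hεε, one_mul],
        mob_two_mul_coe_mul hε (abs_pos.mp (by linarith))]
      exact ⟨_, two_sub_inv_mem_Icc_of_one_le_abs hεx, rfl⟩
  | succ j ih =>
    obtain ⟨u, hu, hxz⟩ := ih
    rw [cfMap_succ', ← hxz, mob_two_mul_coe_mul hε (by linarith [hu.1])]
    refine ⟨_, ?_, rfl⟩
    push_cast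
    exact two_sub_inv_mem_Icc j hu

theorem exists_tail_eq_two_mul {c : ℕ → ℤ}
    (ht : SameTail c (fun _ => 2) ∨ SameTail c (fun _ => -2)) :
    ∃ ℓ ε, 1 ≤ ℓ ∧ (ε = 1 ∨ ε = -1) ∧ ∀ k, c (ℓ + k) = 2 * ε := by
  rcases ht with ⟨r, s, h⟩ | ⟨r, s, h⟩
  · exact ⟨r + 1, 1, by omega, Or.inl rfl, fun k => by simpa [add_assoc] using h (1 + k)⟩
  · exact ⟨r + 1, -1, by omega, Or.inr rfl, fun k => by simpa [add_assoc] using h (1 + k)⟩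

theorem eventually_cfConv_mem_image_nhds {b bstar : ℕ → ℤ} (hp : PTendsToTop b)
    (hb : EventuallyCoeff b bstar) {ℓ : ℕ} {ε : ℤ} (hℓ : 1 ≤ ℓ) (hε : ε = 1 ∨ ε = -1)
    (htail : ∀ k, bstar (ℓ + k) = 2 * ε) {V : Set ℝ} (hV : V ∈ 𝓝 (ε : ℝ)) :
    ∀ᶠ N in atTop, cfConv b N ∈ (fun x : ℝ => cfMap bstar ℓ x) '' V := by
  obtain ⟨δ, hδ, hball⟩ := Metric.mem_nhds_iff.mp hV
  obtain ⟨j, hj⟩ := exists_nat_gt (2 / δ)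
  filter_upwards [eventually_cfConv_mem_image hp hb (ℓ := ℓ + (j + 1)) (by omega)]
    with N ⟨z, hz, hzN⟩
  rw [cfMap_add, cfMap_congr fun k _ => htail k] at hzN
  obtain ⟨u, ⟨hu1, hu2⟩, huz⟩ := cfMap_const_mem hε j hz
  refine ⟨ε * u, hball ?_, by rw [← hzN, ← huz]⟩
  have hdist : dist ((ε : ℝ) * u) ε = u - 1 := by
    rw [Real.dist_eq, ← mul_sub_one, abs_mul, abs_of_nonneg (by linarith : (0 : ℝ) ≤ u - 1)]
    rcases hε with rfl | rfl <;> simp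
  have hjδ : 2 / (j + 1 : ℝ) < δ := by
    rw [div_lt_iff₀ hδ] at hj
    rw [div_lt_iff₀ (by positivity)]
    linarith
  rw [Metric.mem_ball, hdist]
  linarith

/-- **Theorem 1(i)(a).** If `p⁽ⁿ⁾ → ∞` and the limit continued fraction `[b₀*, b₁*, …]`
has the same tail as `[2,2,…]` or `[-2,-2,…]`, then `[b₀, b₁, …]` converges to a rational. -/
theorem stmt0 (b bstar : ℕ → ℤ) (hp : PTendsToTop b) (hb : EventuallyCoeff b bstar)
    (ht : SameTail bstar (fun _ => 2) ∨ SameTail bstar (fun _ => -2)) :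
    ∃ q : ℚ, Filter.Tendsto (cfConv b) Filter.atTop (nhds ((q : ℝ) : OnePoint ℝ)) := by
  obtain ⟨ℓ, ε, hℓ, hε, htail⟩ := exists_tail_eq_two_mul ht
  have hfinite : cfMap bstar ℓ (ε : ℝ) ≠ ∞ := by
    obtain ⟨r, rfl⟩ : ∃ r, ℓ = r + 1 := ⟨ℓ - 1, by omega⟩
    refine cfMap_succ_ne_infty (fun k hk _ => two_le_abs_bstar hp hb hk) ⟨ε, ?_, rfl⟩
    rcases hε with rfl | rfl <;> simp
  obtain ⟨q, hq⟩ : ∃ q : ℚ, cfMap bstar ℓ (ε : ℝ) = ((q : ℝ) : OnePoint ℝ) :=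
    (isExtRat_cfMap bstar ℓ (Or.inr ⟨ε, by simp⟩)).resolve_left hfinite
  have hcont : ContinuousAt (fun x : ℝ => cfMap bstar ℓ x) ε := by
    simp only [cfMap_eq_smul] at hfinite ⊢
    exact OnePoint.continuousAt_smul_coe _ hfinite
  exact ⟨q, hq ▸ tendsto_of_eventually_mem_image hcont fun V hV =>
    eventually_cfConv_mem_image_nhds hp hb hℓ hε htail hV⟩
end

section
/- Let (b₀,b₁,…) be a sequence of integers with |b_n| ≥ 2 for all n ≥ 1. Then the continued fraction [b₀,b₁,…] converges to a real number, and this number is rational if and only if [b₀,b₁,…] has the same tail as [2,2,2,…] or as [−2,−2,−2,…] (otherwise it is irrational). -/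
open Filter Topology OnePoint

/-!
Write the `n`-th convergent as `pₙ / qₙ`. The condition `|bₙ| ≥ 2` forces `|qₙ| ≥ n + 1`, and
`pₙ₊₁ qₙ - pₙ qₙ₊₁ = -1` then gives `|vₙ - vₙ₊₁| ≤ 1 / (n + 1)²`, so the convergents converge.
The tails `tₖ = [bₖ, bₖ₊₁, …]` satisfy `tₖ = bₖ - 1 / tₖ₊₁`, with `|tₖ| ≥ 1` for `k ≥ 1`.
If `t₀` is rational, so is every `tₖ`; as `tₖ₊₁ = 1 / (bₖ - tₖ)`, the numerator of `tₖ₊₁` is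
`±` the denominator of `tₖ`, so `|tₖ₊₁| ≥ 1` makes the denominators non-increasing. Where they
stop decreasing, `|tₖ| = 1`, and from then on `|bₖ| ≥ 2` forces `bₖ = 2 tₖ` and `tₖ₊₁ = tₖ`.
Conversely `[2, 2, …] = 1`, `[-2, -2, …] = -1`, and rationality passes from `tₖ₊₁` to `tₖ`.
-/

namespace Rat

theorem natAbs_num_inv_intCast_sub (n : ℤ) {x : ℚ} (h : (n : ℚ) - x ≠ 0) :
    ((n - x)⁻¹).num.natAbs = x.den := by
  rw [num_inv, Int.natAbs_mul, Int.natAbs_sign_of_ne_zero (num_ne_zero.mpr h), intCast_sub_den,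
    one_mul, Int.natAbs_natCast]

theorem den_le_natAbs_num {y : ℚ} (h : 1 ≤ |y|) : y.den ≤ y.num.natAbs := by
  have := mt num_lt_denom_iff.mp h.not_gt
  rw [num_abs_eq_abs_num, den_abs_eq_den, not_lt, Int.abs_eq_natAbs] at this
  omega

theorem abs_eq_one_of_natAbs_num_eq_den {y : ℚ} (h : y.num.natAbs = y.den) : |y| = 1 := by
  rw [← num_div_den y, abs_div, Nat.abs_cast, ← Int.cast_abs, Int.abs_eq_natAbs, h]
  push_cast
  exact div_self (by exact_mod_cast y.den_ne_zero)

end Rat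

namespace NegCF

-- `numDen n b = (pₙ, qₙ)` with `pₙ / qₙ = [b₀, …, bₙ]`, computed by peeling off `b₀`:
-- `[b₀, b₁, …, bₙ] = b₀ - 1 / [b₁, …, bₙ]`.
def numDen : ℕ → (ℕ → ℤ) → ℤ × ℤ
  | 0, b => (b 0, 1)
  | n + 1, b =>
    (b 0 * (numDen n fun i => b (i + 1)).1 - (numDen n fun i => b (i + 1)).2,
      (numDen n fun i => b (i + 1)).1)

variable {b : ℕ → ℤ}

theorem abs_den_lt_abs_num (hb : ∀ i, 2 ≤ |b i|) (n : ℕ) :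
    |(numDen n b).2| < |(numDen n b).1| := by
  induction n generalizing b with
  | zero => simp only [numDen, abs_one]; linarith [hb 0]
  | succ n ih =>
    set p := (numDen n fun i => b (i + 1)).1
    set q := (numDen n fun i => b (i + 1)).2
    have hpq : |q| < |p| := ih fun i => hb (i + 1)
    have hsub : |b 0 * p| - |q| ≤ |b 0 * p - q| := abs_sub_abs_le_abs_sub _ _
    rw [abs_mul] at hsub
    show |p| < |b 0 * p - q|
    nlinarith [hb 0, abs_nonneg q]

theorem le_abs_den (hb : ∀ i, 2 ≤ |b (i + 1)|) (n : ℕ) : (n : ℤ) + 1 ≤ |(numDen n b).2| := by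
  induction n generalizing b with
  | zero => simp [numDen]
  | succ n ih =>
    have h1 := ih (b := fun i => b (i + 1)) fun i => hb (i + 1)
    have h2 := abs_den_lt_abs_num hb n
    show (n : ℤ) + 1 + 1 ≤ |(numDen n fun i => b (i + 1)).1|
    omega

theorem numDen_det (b : ℕ → ℤ) (n : ℕ) :
    (numDen (n + 1) b).1 * (numDen n b).2 - (numDen n b).1 * (numDen (n + 1) b).2 = -1 := by
  induction n generalizing b with
  | zero => simp [numDen]
  | succ n ih =>
    have := ih fun i => b (i + 1)
    simp only [numDen] at *
    linear_combination this

noncomputable def convergent (b : ℕ → ℤ) (n : ℕ) : ℝ := (numDen n b).1 / (numDen n b).2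

theorem den_ne_zero (hb : ∀ i, 2 ≤ |b (i + 1)|) (n : ℕ) : ((numDen n b).2 : ℝ) ≠ 0 := by
  have := le_abs_den hb n
  exact Int.cast_ne_zero.mpr (abs_pos.mp (by omega))

theorem convergent_succ (hb : ∀ i, 2 ≤ |b (i + 1)|) (n : ℕ) :
    convergent b (n + 1) = b 0 - (convergent (fun i => b (i + 1)) n)⁻¹ := by
  have hp : ((numDen n fun i => b (i + 1)).1 : ℝ) ≠ 0 :=
    Int.cast_ne_zero.mpr (abs_pos.mp ((abs_nonneg _).trans_lt (abs_den_lt_abs_num hb n)))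
  simp only [convergent, numDen, inv_div]
  push_cast
  field_simp

theorem one_le_abs_convergent (hb : ∀ i, 2 ≤ |b i|) (n : ℕ) : 1 ≤ |convergent b n| := by
  have hq := den_ne_zero (fun i => hb (i + 1)) n
  have hlt : |((numDen n b).2 : ℝ)| < |((numDen n b).1 : ℝ)| := by
    exact_mod_cast abs_den_lt_abs_num hb n
  rw [convergent, abs_div, one_le_div (abs_pos.mpr hq)]
  exact hlt.le

theorem dist_convergent_succ_le (hb : ∀ i, 2 ≤ |b (i + 1)|) (n : ℕ) :
    dist (convergent b n) (convergent b (n + 1)) ≤ 1 / ((n : ℝ) + 1) ^ 2 := by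
  have hq₀ := den_ne_zero hb n
  have hq₁ := den_ne_zero hb (n + 1)
  have hdet : ((numDen (n + 1) b).1 : ℝ) * (numDen n b).2 - (numDen n b).1 * (numDen (n + 1) b).2
      = -1 := by exact_mod_cast numDen_det b n
  have h₀ : (n : ℝ) + 1 ≤ |((numDen n b).2 : ℝ)| := by exact_mod_cast le_abs_den hb n
  have h₁ : (n : ℝ) + 1 ≤ |((numDen (n + 1) b).2 : ℝ)| := by
    have := le_abs_den hb (n + 1)
    push_cast at this
    exact_mod_cast (by omega : (n : ℤ) + 1 ≤ _)
  have hdist : dist (convergent b n) (convergent b (n + 1)) =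
      1 / (|((numDen n b).2 : ℝ)| * |((numDen (n + 1) b).2 : ℝ)|) := by
    rw [Real.dist_eq, convergent, convergent, div_sub_div _ _ hq₀ hq₁, abs_div, abs_mul]
    congr 1
    rw [show ((numDen n b).1 : ℝ) * (numDen (n + 1) b).2 - (numDen n b).2 * (numDen (n + 1) b).1
      = 1 by linear_combination -hdet, abs_one]
  rw [hdist, sq]
  gcongr

theorem cauchySeq_convergent (hb : ∀ i, 2 ≤ |b (i + 1)|) : CauchySeq (convergent b) := by
  refine cauchySeq_of_dist_le_of_summable _ (dist_convergent_succ_le hb) ?_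
  exact_mod_cast (summable_nat_add_iff 1).mpr (Real.summable_one_div_nat_pow.mpr one_lt_two)

noncomputable def value (b : ℕ → ℤ) : ℝ := limUnder atTop (convergent b)

theorem tendsto_convergent_value (hb : ∀ i, 2 ≤ |b (i + 1)|) :
    Tendsto (convergent b) atTop (𝓝 (value b)) :=
  (cauchySeq_convergent hb).tendsto_limUnder

theorem one_le_abs_value (hb : ∀ i, 2 ≤ |b i|) : 1 ≤ |value b| :=
  ge_of_tendsto' (tendsto_convergent_value fun i => hb (i + 1)).abs (one_le_abs_convergent hb)

theorem value_eq_sub_inv (hb : ∀ i, 2 ≤ |b (i + 1)|) :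
    value b = b 0 - (value fun i => b (i + 1))⁻¹ := by
  have hne : (value fun i => b (i + 1)) ≠ 0 :=
    abs_pos.mp (one_pos.trans_le (one_le_abs_value hb))
  refine tendsto_nhds_unique ((tendsto_convergent_value hb).comp (tendsto_add_atTop_nat 1)) ?_
  simp only [Function.comp_def, convergent_succ hb]
  exact tendsto_const_nhds.sub
    ((tendsto_convergent_value fun i => hb (i + 1)).inv₀ hne)

theorem mob_coe (c : ℤ) {x : ℝ} (hx : x ≠ 0) : mob c x = ((c - x⁻¹ : ℝ) : OnePoint ℝ) := by
  simp only [mob, one_div]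
  exact if_neg hx

theorem cfConv_succ (b : ℕ → ℤ) (n : ℕ) :
    cfConv b (n + 1) = mob (b 0) (cfConv (fun i => b (i + 1)) n) := by
  simp only [cfConv, List.range_succ_eq_map, List.map_cons, List.map_map, cfVal]
  rfl

theorem cfConv_eq_convergent (hb : ∀ i, 2 ≤ |b (i + 1)|) (n : ℕ) :
    cfConv b n = convergent b n := by
  induction n generalizing b with
  | zero =>
    simp only [cfConv, zero_add, List.range_one, List.map_cons, List.map_nil, cfVal, convergent,
      numDen, Int.cast_one, div_one]
    rfl
  | succ n ih =>
    have hne : convergent (fun i => b (i + 1)) n ≠ 0 :=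
      abs_pos.mp (one_pos.trans_le (one_le_abs_convergent hb n))
    rw [cfConv_succ, ih fun i => hb (i + 1), convergent_succ hb, mob_coe _ hne]

theorem numDen_neg (b : ℕ → ℤ) (n : ℕ) :
    numDen n (-b) = ((-1) ^ (n + 1) * (numDen n b).1, (-1) ^ n * (numDen n b).2) := by
  induction n generalizing b with
  | zero => simp [numDen]
  | succ n ih =>
    have := ih fun i => b (i + 1)
    simp only [numDen, Pi.neg_apply] at *
    rw [show (fun i => -b (i + 1)) = -(fun i => b (i + 1)) from rfl, this, Prod.mk.injEq]
    exact ⟨by ring, by ring⟩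

theorem convergent_neg (b : ℕ → ℤ) (n : ℕ) : convergent (-b) n = -convergent b n := by
  simp only [convergent, numDen_neg]
  push_cast
  rw [pow_succ, mul_assoc, mul_div_mul_left _ _ (pow_ne_zero n (by norm_num)), neg_one_mul,
    neg_div]

theorem value_two : value (fun _ => 2) = 1 := by
  have hconv : ∀ n : ℕ, convergent (fun _ => 2) n = 1 + 1 / ((n : ℝ) + 1) := by
    intro n
    have hnd : numDen n (fun _ => 2) = ((n : ℤ) + 2, (n : ℤ) + 1) := by
      induction n with
      | zero => rfl
      | succ n ih => simp only [numDen, ih, Prod.mk.injEq]; constructor <;> omega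
    rw [convergent, hnd]
    push_cast
    field_simp
    ring
  refine tendsto_nhds_unique (tendsto_convergent_value fun _ => by norm_num) ?_
  rw [funext hconv]
  simpa using tendsto_const_nhds.add (tendsto_one_div_add_atTop_nhds_zero_nat (𝕜 := ℝ))

theorem value_neg_two : value (fun _ => -2) = -1 := by
  refine tendsto_nhds_unique (tendsto_convergent_value fun _ => by norm_num) ?_
  rw [← value_two]
  convert (tendsto_convergent_value (b := fun _ => 2) fun _ => by norm_num).neg using 1
  exact funext (convergent_neg fun _ => 2)

theorem value_tail_eq (hb : ∀ n, 1 ≤ n → 2 ≤ |b n|) (k : ℕ) :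
    value (fun i => b (k + i)) = b k - (value fun i => b (k + 1 + i))⁻¹ := by
  rw [value_eq_sub_inv (b := fun i => b (k + i)) fun i => hb _ (by omega)]
  simp only [add_zero, add_assoc, add_comm 1]

theorem eq_of_eq_sub_inv_of_abs_eq_one {β s t : ℝ} (hβ : 2 ≤ |β|) (ht : 1 ≤ |t|) (hs : |s| = 1)
    (h : s = β - t⁻¹) : t = s ∧ β = 2 * s := by
  have hinv : |t⁻¹| ≤ 1 := by rw [abs_inv]; exact inv_le_one_of_one_le₀ ht
  rw [show t⁻¹ = β - s by linarith, abs_le] at hinv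
  rcases abs_eq zero_le_one |>.mp hs with rfl | rfl
  · have hβ2 : β = 2 := by cases le_abs'.mp hβ <;> linarith
    exact ⟨inv_eq_one.mp (by linarith), by linarith⟩
  · have hβ2 : β = -2 := by cases le_abs'.mp hβ <;> linarith
    have : t⁻¹ = -1 := by linarith
    exact ⟨by rw [← inv_inv t, this]; norm_num, by linarith⟩

section Tails

variable {t : ℕ → ℝ}

theorem sameTail_of_abs_eq_one (hb : ∀ n, 1 ≤ n → 2 ≤ |b n|)
    (hrec : ∀ k, t k = b k - (t (k + 1))⁻¹) (habs : ∀ k, 1 ≤ k → 1 ≤ |t k|) {j : ℕ}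
    (hj : 1 ≤ j) (htj : |t j| = 1) : SameTail b (fun _ => 2) ∨ SameTail b (fun _ => -2) := by
  have step : ∀ k, j ≤ k → |t k| = 1 → t (k + 1) = t k ∧ (b k : ℝ) = 2 * t k := fun k hk h =>
    eq_of_eq_sub_inv_of_abs_eq_one (by exact_mod_cast hb k (by omega)) (habs (k + 1) (by omega))
      h (hrec k)
  have hconst : ∀ i, t (j + i) = t j := by
    intro i
    induction i with
    | zero => rfl
    | succ i ih => rw [← add_assoc, (step _ (by omega) (ih ▸ htj)).1, ih]
  have hbconst : ∀ i, (b (j + i) : ℝ) = 2 * t j := fun i =>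
    hconst i ▸ (step _ (by omega) (hconst i ▸ htj)).2
  rcases abs_eq zero_le_one |>.mp htj with h | h
  · refine .inl ⟨j, 0, fun i => ?_⟩
    exact_mod_cast (by rw [hbconst, h]; norm_num : (b (j + i) : ℝ) = 2)
  · refine .inr ⟨j, 0, fun i => ?_⟩
    exact_mod_cast (by rw [hbconst, h]; norm_num : (b (j + i) : ℝ) = -2)

theorem exists_abs_eq_one_of_rat (hrec : ∀ k, t k = b k - (t (k + 1))⁻¹)
    (habs : ∀ k, 1 ≤ k → 1 ≤ |t k|) {q : ℚ} (hq : t 0 = q) : ∃ j, 1 ≤ j ∧ |t j| = 1 := by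
  obtain ⟨r, hr0, hrs⟩ : ∃ r : ℕ → ℚ, r 0 = q ∧ ∀ k, r (k + 1) = ((b k : ℚ) - r k)⁻¹ :=
    ⟨fun k => Nat.rec q (fun k x => ((b k : ℚ) - x)⁻¹) k, rfl, fun _ => rfl⟩
  have hr : ∀ k, t k = r k := by
    intro k
    induction k with
    | zero => rw [hq, hr0]
    | succ k ih => rw [hrs, Rat.cast_inv, Rat.cast_sub, Rat.cast_intCast, ← ih, hrec k]; simp
  have habsr : ∀ k, 1 ≤ |r (k + 1)| := fun k => by
    have := habs (k + 1) (by omega); rw [hr] at this; exact_mod_cast this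
  have hne : ∀ k, (b k : ℚ) - r k ≠ 0 := fun k h => by
    have := habsr k; rw [hrs, h] at this; norm_num at this
  have hnum : ∀ k, (r (k + 1)).num.natAbs = (r k).den := fun k => by
    rw [hrs]; exact Rat.natAbs_num_inv_intCast_sub _ (hne k)
  have hden : ∀ k, (r (k + 1)).den ≤ (r k).den := fun k =>
    hnum k ▸ Rat.den_le_natAbs_num (habsr k)
  set m := Function.argmin fun k => (r k).den
  have hm : (r (m + 1)).den = (r m).den :=
    (hden m).antisymm (Function.argmin_le (fun k => (r k).den) (m + 1))
  refine ⟨m + 1, by omega, ?_⟩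
  rw [hr]
  exact_mod_cast Rat.abs_eq_one_of_natAbs_num_eq_den ((hnum m).trans hm.symm)

theorem exists_rat_of_exists_rat (hrec : ∀ k, t k = b k - (t (k + 1))⁻¹) {j : ℕ}
    (hj : ∃ q : ℚ, t j = q) : ∃ q : ℚ, t 0 = q := by
  induction j with
  | zero => exact hj
  | succ j ih =>
    obtain ⟨q, hq⟩ := hj
    exact ih ⟨b j - q⁻¹, by rw [hrec j, hq]; push_cast; ring⟩

end Tails

end NegCF

open NegCF in
/-- **Theorem 2.** If `|bₙ| ≥ 2` for all `n ≥ 1`, then `[b₀, b₁, …]` converges to a real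
number, which is rational if and only if `[b₀, b₁, …]` has the same tail as `[2,2,…]`
or `[-2,-2,…]` (and is irrational otherwise). -/
theorem stmt4 (b : ℕ → ℤ) (hb : ∀ n : ℕ, 1 ≤ n → 2 ≤ |b n|) :
    ∃ α : ℝ, Filter.Tendsto (cfConv b) Filter.atTop (nhds ((α : OnePoint ℝ))) ∧
      ((∃ q : ℚ, α = (q : ℝ)) ↔
        (SameTail b (fun _ => 2) ∨ SameTail b (fun _ => -2))) := by
  set t : ℕ → ℝ := fun k => value fun i => b (k + i)
  have hrec : ∀ k, t k = b k - (t (k + 1))⁻¹ := value_tail_eq hb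
  have habs : ∀ k, 1 ≤ k → 1 ≤ |t k| := fun k hk => one_le_abs_value fun i => hb _ (by omega)
  have ht0 : t 0 = value b := by simp only [t, zero_add]
  have hb₁ : ∀ i, 2 ≤ |b (i + 1)| := fun i => hb _ (by omega)
  refine ⟨value b, ?_, fun ⟨q, hq⟩ => ?_, ?_⟩
  · rw [show cfConv b = _ from funext (cfConv_eq_convergent hb₁)]
    exact (continuous_coe.tendsto _).comp (tendsto_convergent_value hb₁)
  · obtain ⟨j, hj, htj⟩ := exists_abs_eq_one_of_rat hrec habs (ht0.trans hq)
    exact sameTail_of_abs_eq_one hb hrec habs hj htj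
  · rintro (⟨r, s, hrs⟩ | ⟨r, s, hrs⟩)
    · have htr : t r = (1 : ℚ) := by
        simp only [t, funext hrs, value_two, Rat.cast_one]
      exact ht0 ▸ exists_rat_of_exists_rat hrec ⟨1, htr⟩
    · have htr : t r = (-1 : ℚ) := by
        simp only [t, funext hrs, value_neg_two, Rat.cast_neg, Rat.cast_one]
      exact ht0 ▸ exists_rat_of_exists_rat hrec ⟨-1, htr⟩
end

section
/- An infinite path ⟨v₀,v₁,v₂,…⟩ in the Farey graph converges (i.e., the sequence (v_n) converges in ℝ∞, the one-point compactification of ℝ) if and only if there do NOT exist two distinct vertices u, w ∈ ℚ∞ such that v_n = u for infinitely many n and v_n = w for infinitely many n. -/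
open Filter Topology OnePoint

/-!
If the path does not converge, it has two cluster points `α ≠ β` in the compact space `ℝ∞`.
A fraction strictly between the ends of a Farey edge has denominator at least the sum of
theirs. Hence a closed interval `N ∋ α` with endpoints of denominator `≤ D` can be left along a
Farey edge only from one of its finitely many vertices of denominator `≤ D` (for `α = ∞`, take
`N = ℝ∞ ∖ (-n, n)`, left only from `±n` and `∞`). Choosing `N` small enough to miss `β`, the path
enters `N` and leaves it infinitely often, so it visits one of these exits `u ≠ β` infinitely
often. Doing this for a pair of cluster points `(M, L)` and then for `(L, u)` gives two distinct
vertices visited infinitely often. Conversely, a convergent path has a single cluster point.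
-/

lemma intPt_eq_coe_iff {a b : ℤ} {x : ℝ} : intPt a b = x ↔ b ≠ 0 ∧ x = a / b := by
  unfold intPt
  split_ifs with hb
  · simp [hb, infty_ne_coe]
  · simp [hb, eq_comm]

lemma intPt_eq_infty_iff {a b : ℤ} : intPt a b = ∞ ↔ b = 0 := by
  unfold intPt
  split_ifs with hb <;> simp [hb, coe_ne_infty]

lemma isExtRat_intPt (a b : ℤ) : IsExtRat (intPt a b) := by
  unfold intPt IsExtRat
  split_ifs
  · exact Or.inl rfl
  · exact Or.inr ⟨a / b, by push_cast; rfl⟩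

lemma fareyAdj_iff_isUnit {x y : OnePoint ℝ} :
    FareyAdj x y ↔ ∃ a b c d : ℤ, x = intPt a b ∧ y = intPt c d ∧ IsUnit (a * d - b * c) := by
  simp only [FareyAdj, Int.isUnit_iff]

lemma FareyAdj.symm {x y : OnePoint ℝ} (h : FareyAdj x y) : FareyAdj y x := by
  obtain ⟨a, b, c, d, hx, hy, hdet⟩ := fareyAdj_iff_isUnit.1 h
  refine fareyAdj_iff_isUnit.2 ⟨c, d, a, b, hy, hx, ?_⟩
  rw [show c * b - d * a = -(a * d - b * c) by ring]
  exact hdet.neg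

lemma FareyAdj.isExtRat {x y : OnePoint ℝ} (h : FareyAdj x y) : IsExtRat x := by
  obtain ⟨a, b, -, -, rfl, -⟩ := h
  exact isExtRat_intPt a b

lemma FareyAdj.exists_pos_den {x y : ℝ} (h : FareyAdj x y) :
    ∃ a b c d : ℤ, 0 < b ∧ 0 < d ∧ x = a / b ∧ y = c / d ∧ IsUnit (a * d - b * c) := by
  obtain ⟨a, b, c, d, hx, hy, hdet⟩ := fareyAdj_iff_isUnit.1 h
  obtain ⟨hb, rfl⟩ := intPt_eq_coe_iff.1 hx.symm
  obtain ⟨hd, rfl⟩ := intPt_eq_coe_iff.1 hy.symm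
  have hsign (e : ℤ) (he : e ≠ 0) : IsUnit e.sign :=
    Int.isUnit_iff_natAbs_eq.2 (Int.natAbs_sign_of_ne_zero he)
  have hdiv (e f : ℤ) (hf : f ≠ 0) : (e : ℝ) / f = ((f.sign * e : ℤ) : ℝ) / |f| := by
    rw [← Int.sign_mul_self_eq_abs, Int.cast_mul, Int.cast_mul, mul_div_mul_left]
    exact_mod_cast (hsign f hf).ne_zero
  refine ⟨b.sign * a, |b|, d.sign * c, |d|, abs_pos.2 hb, abs_pos.2 hd, hdiv a b hb,
    hdiv c d hd, ?_⟩
  rw [← Int.sign_mul_self_eq_abs, ← Int.sign_mul_self_eq_abs,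
    show b.sign * a * (d.sign * d) - b.sign * b * (d.sign * c)
      = b.sign * d.sign * (a * d - b * c) by ring]
  exact ((hsign b hb).mul (hsign d hd)).mul hdet

lemma FareyAdj.exists_int_of_infty {x : ℝ} (h : FareyAdj x ∞) : ∃ m : ℤ, x = m := by
  obtain ⟨a, b, c, d, hx, hy, hdet⟩ := fareyAdj_iff_isUnit.1 h
  obtain ⟨hb, rfl⟩ := intPt_eq_coe_iff.1 hx.symm
  rw [eq_comm, intPt_eq_infty_iff] at hy
  subst hy
  rcases Int.isUnit_iff.1 (isUnit_of_mul_isUnit_left (by simpa using hdet.neg)) with rfl | rfl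
  · exact ⟨a, by simp⟩
  · exact ⟨-a, by simp [div_neg]⟩

-- For `a/b < m/w < c/d` with `ad - bc = -1`: `w = d (m b - a w) + b (c w - m d)`, a sum of
-- positive multiples of `d` and `b`.
lemma add_le_den_of_farey_edge {a b c d m w : ℤ} (hb : 0 < b) (hd : 0 < d) (hw : 0 < w)
    (hdet : IsUnit (a * d - b * c)) (h₁ : a * w < m * b) (h₂ : m * d < c * w) :
    b + d ≤ w := by
  have hlt : a * d < c * b := by
    have := mul_lt_mul_of_pos_right h₁ hd
    have := mul_lt_mul_of_pos_right h₂ hb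
    nlinarith
  have hdet' : a * d - b * c = -1 := by
    rcases Int.isUnit_iff.1 hdet with h | h
    · linarith
    · exact h
  have h₁' : 1 ≤ m * b - a * w := by linarith
  have h₂' : 1 ≤ c * w - m * d := by linarith
  calc b + d ≤ d * (m * b - a * w) + b * (c * w - m * d) := by nlinarith
    _ = w := by linear_combination (-w) * hdet'

lemma FareyAdj.add_den_le {x y : ℝ} (h : FareyAdj x y) {m w : ℤ} (hw : 0 < w)
    (hx : x < m / w) (hy : m / w < y) :
    ∃ a b c d : ℤ, 0 < b ∧ 0 < d ∧ x = a / b ∧ y = c / d ∧ b + d ≤ w := by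
  obtain ⟨a, b, c, d, hb, hd, rfl, rfl, hdet⟩ := h.exists_pos_den
  refine ⟨a, b, c, d, hb, hd, rfl, rfl, add_le_den_of_farey_edge (m := m) hb hd hw hdet ?_ ?_⟩
  · exact_mod_cast (div_lt_div_iff₀ (by exact_mod_cast hb) (by exact_mod_cast hw)).1 hx
  · exact_mod_cast (div_lt_div_iff₀ (by exact_mod_cast hw) (by exact_mod_cast hd)).1 hy

def fracsDenLE (D : ℤ) : Set ℝ := {x | ∃ r s : ℤ, 0 < s ∧ s ≤ D ∧ x = r / s}

lemma finite_Icc_inter_fracsDenLE (p q : ℝ) (D : ℤ) : (Set.Icc p q ∩ fracsDenLE D).Finite := by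
  refine ((Set.finite_Icc 1 D).biUnion fun s _ =>
    (Set.finite_Icc ⌈p * s⌉ ⌊q * s⌋).image fun r : ℤ => (r : ℝ) / s).subset ?_
  rintro x ⟨⟨hpx, hxq⟩, r, s, hs, hsD, rfl⟩
  have hs' : (0 : ℝ) < s := by exact_mod_cast hs
  simp only [Set.mem_iUnion, Set.mem_image, Set.mem_Icc]
  refine ⟨s, ⟨hs, hsD⟩, r, ⟨Int.ceil_le.2 ?_, Int.le_floor.2 ?_⟩, rfl⟩
  · exact (le_div_iff₀ hs').1 hpx
  · exact (div_le_iff₀ hs').1 hxq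

def IsTrap {X : Type*} (r : X → X → Prop) (N B : Set X) : Prop :=
  B.Finite ∧ B ⊆ N ∧ ∀ ⦃x y⦄, r x y → x ∈ N → x ∉ B → y ∈ N

lemma IsTrap.exists_frequently_eq {X : Type*} [TopologicalSpace X] {r : X → X → Prop}
    {N B : Set X} (hNB : IsTrap r N B) {v : ℕ → X} (hv : ∀ n, r (v n) (v (n + 1)))
    {α β : X} (hα : MapClusterPt α atTop v) (hN : N ∈ 𝓝 α)
    (hβ : MapClusterPt β atTop v) (hNβ : Nᶜ ∈ 𝓝 β) :
    ∃ u ∈ B, ∃ᶠ n in atTop, v n = u := by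
  by_contra! hB
  obtain ⟨M, hM⟩ := eventually_atTop.1 ((eventually_all_finite hNB.1).2 hB)
  obtain ⟨n₀, hn₀M, hn₀⟩ := frequently_atTop.1 (mapClusterPt_iff_frequently.1 hα N hN) M
  have hstay : ∀ n ≥ n₀, v n ∈ N := by
    intro n hn
    induction n, hn using Nat.le_induction with
    | base => exact hn₀
    | succ n hn ih => exact hNB.2.2 (hv n) ih fun h => hM n (hn₀M.trans hn) _ h rfl
  obtain ⟨n, hn, hnN⟩ := frequently_atTop.1 (mapClusterPt_iff_frequently.1 hβ _ hNβ) n₀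
  exact hnN (hstay n hn)

lemma isTrap_Icc {p q : ℝ} {D : ℤ} (hp : p ∈ fracsDenLE D) (hq : q ∈ fracsDenLE D) :
    IsTrap FareyAdj ((↑) '' Set.Icc p q) ((↑) '' (Set.Icc p q ∩ fracsDenLE D)) := by
  refine ⟨(finite_Icc_inter_fracsDenLE p q D).image _,
    Set.image_mono Set.inter_subset_left, ?_⟩
  rintro x y hxy ⟨x, hx, rfl⟩ hxB
  have hxD : x ∉ fracsDenLE D := fun h => hxB ⟨x, ⟨hx, h⟩, rfl⟩
  have hD : 0 < D := by obtain ⟨-, w, hw, hwD, -⟩ := hp; exact hw.trans_le hwD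
  cases y with
  | infty =>
    obtain ⟨k, rfl⟩ := hxy.exists_int_of_infty
    exact absurd ⟨k, 1, one_pos, hD, by simp⟩ hxD
  | coe y =>
    -- an edge leaving `[p, q]` jumps over `p` or `q`, so its inner end has denominator `< D`
    refine ⟨y, Set.mem_Icc.2 ⟨le_of_not_gt fun hyp => ?_, le_of_not_gt fun hqy => ?_⟩, rfl⟩
    · obtain ⟨m, w, hw, hwD, rfl⟩ := hp
      have hpx : (m : ℝ) / w < x := hx.1.lt_of_ne fun h => hxD (h ▸ ⟨m, w, hw, hwD, rfl⟩)
      obtain ⟨-, b, c, d, hb, hd, -, rfl, hbd⟩ := hxy.symm.add_den_le hw hyp hpx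
      exact hxD ⟨c, d, hd, by omega, rfl⟩
    · obtain ⟨m, w, hw, hwD, rfl⟩ := hq
      have hxq : x < (m : ℝ) / w := hx.2.lt_of_ne fun h => hxD (h ▸ ⟨m, w, hw, hwD, rfl⟩)
      obtain ⟨a, b, -, d, hb, hd, rfl, -, hbd⟩ := hxy.add_den_le hw hxq hqy
      exact hxD ⟨a, b, hb, by omega, rfl⟩

lemma isTrap_compl_Ioo (n : ℤ) :
    IsTrap FareyAdj ((↑) '' Set.Ioo (-n : ℝ) n)ᶜ
      {∞, ((n : ℝ) : OnePoint ℝ), ((-n : ℝ) : OnePoint ℝ)} := by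
  refine ⟨Set.toFinite _, ?_, ?_⟩
  · rintro x (rfl | rfl | rfl) ⟨y, hy, hyx⟩
    · exact coe_ne_infty y hyx
    all_goals
      rw [coe_eq_coe] at hyx
      subst hyx
      simp at hy
  · rintro x y hxy hxN hxB
    cases x with
    | infty => exact absurd (Or.inl rfl) hxB
    | coe x =>
      rintro ⟨y, hy, rfl⟩
      simp only [Set.mem_insert_iff, Set.mem_singleton_iff, coe_eq_coe, coe_ne_infty, false_or,
        not_or] at hxB
      have hx : x < -n ∨ n < x := by
        by_contra! h
        exact hxN ⟨x, ⟨lt_of_le_of_ne h.1 (Ne.symm hxB.2), lt_of_le_of_ne h.2 hxB.1⟩, rfl⟩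
      rcases hx with hx | hx
      · obtain ⟨-, b, -, d, hb, hd, -, -, hbd⟩ :=
          hxy.add_den_le (m := -n) one_pos (by simpa using hx) (by simpa using hy.1)
        omega
      · obtain ⟨-, b, -, d, hb, hd, -, -, hbd⟩ :=
          hxy.symm.add_den_le (m := n) one_pos (by simpa using hy.2) (by simpa using hx)
        omega

lemma exists_isTrap_nhds_infty (b : ℝ) :
    ∃ N B, IsTrap FareyAdj N B ∧ N ∈ 𝓝 ∞ ∧ Nᶜ ∈ 𝓝 (b : OnePoint ℝ) := by
  obtain ⟨n, hn⟩ := exists_int_gt |b|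
  refine ⟨_, _, isTrap_compl_Ioo n, ?_, ?_⟩
  · refine mem_of_superset ((isOpen_compl_image_coe.2 ⟨isClosed_Icc, isCompact_Icc⟩).mem_nhds
      infty_notMem_image_coe) (Set.compl_subset_compl.2 (Set.image_mono Set.Ioo_subset_Icc_self))
  · rw [compl_compl]
    exact (isOpen_image_coe.2 isOpen_Ioo).mem_nhds ⟨b, abs_lt.1 hn, rfl⟩

lemma exists_fracsDenLE_Icc_subset (a : ℝ) {ε : ℝ} (hε : 0 < ε) :
    ∃ D p q, p ∈ fracsDenLE D ∧ q ∈ fracsDenLE D ∧ p < a ∧ a < q ∧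
      Set.Icc p q ⊆ Set.Icc (a - ε) (a + ε) := by
  obtain ⟨D, hεD⟩ := exists_int_gt (1 / ε)
  have hD : (0 : ℝ) < D := lt_trans (by positivity) hεD
  have hD' : 0 < D := by exact_mod_cast hD
  rw [div_lt_iff₀' hε] at hεD
  refine ⟨D, (⌈a * D⌉ - 1 : ℤ) / D, (⌊a * D⌋ + 1 : ℤ) / D, ⟨_, D, hD', le_rfl, rfl⟩,
    ⟨_, D, hD', le_rfl, rfl⟩, ?_, ?_, Set.Icc_subset_Icc ?_ ?_⟩
  · rw [div_lt_iff₀ hD]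
    push_cast
    linarith [Int.ceil_lt_add_one (a * D)]
  · rw [lt_div_iff₀ hD]
    push_cast
    linarith [Int.lt_floor_add_one (a * D)]
  · rw [le_div_iff₀ hD]
    push_cast
    linarith [Int.le_ceil (a * D)]
  · rw [div_le_iff₀ hD]
    push_cast
    linarith [Int.floor_le (a * D)]

lemma exists_notMem_image_Icc {a : ℝ} {β : OnePoint ℝ} (h : (a : OnePoint ℝ) ≠ β) :
    ∃ ε > 0, β ∉ (↑) '' Set.Icc (a - ε) (a + ε) := by
  cases β with
  | infty => exact ⟨1, one_pos, infty_notMem_image_coe⟩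
  | coe b =>
    have hab : 0 < dist b a := dist_pos.2 fun hba => h (hba ▸ rfl)
    refine ⟨dist b a / 2, half_pos hab, ?_⟩
    rintro ⟨c, hc, hcb⟩
    rw [coe_eq_coe] at hcb
    subst hcb
    rw [← Real.closedBall_eq_Icc, Metric.mem_closedBall] at hc
    linarith

lemma exists_isTrap_nhds_coe {a : ℝ} {β : OnePoint ℝ} (h : (a : OnePoint ℝ) ≠ β) :
    ∃ N B, IsTrap FareyAdj N B ∧ N ∈ 𝓝 (a : OnePoint ℝ) ∧ Nᶜ ∈ 𝓝 β := by
  obtain ⟨ε, hε, hβ⟩ := exists_notMem_image_Icc h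
  obtain ⟨D, p, q, hp, hq, hpa, haq, hpq⟩ := exists_fracsDenLE_Icc_subset a hε
  refine ⟨_, _, isTrap_Icc hp hq, ?_, ?_⟩
  · rw [nhds_coe_eq]
    exact image_mem_map (Icc_mem_nhds hpa haq)
  · exact (isCompact_Icc.image continuous_coe).isClosed.isOpen_compl.mem_nhds
      fun hβ' => hβ (Set.image_mono hpq hβ')

lemma exists_isTrap_nhds {α β : OnePoint ℝ} (h : α ≠ β) :
    ∃ N B, IsTrap FareyAdj N B ∧ N ∈ 𝓝 α ∧ Nᶜ ∈ 𝓝 β := by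
  cases α with
  | infty =>
    obtain ⟨b, rfl⟩ := ne_infty_iff_exists.1 h.symm
    exact exists_isTrap_nhds_infty b
  | coe a => exact exists_isTrap_nhds_coe h

lemma exists_frequently_eq_ne_of_mapClusterPt {v : ℕ → OnePoint ℝ}
    (hv : ∀ n, FareyAdj (v n) (v (n + 1))) {α β : OnePoint ℝ} (hα : MapClusterPt α atTop v)
    (hβ : MapClusterPt β atTop v) (h : α ≠ β) :
    ∃ u ≠ β, ∃ᶠ n in atTop, v n = u := by
  obtain ⟨N, B, hNB, hN, hNβ⟩ := exists_isTrap_nhds h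
  obtain ⟨u, huB, hu⟩ := hNB.exists_frequently_eq hv hα hN hβ hNβ
  exact ⟨u, fun huβ => mem_of_mem_nhds hNβ (huβ ▸ hNB.2.1 huB), hu⟩

lemma mapClusterPt_of_frequently_eq {X : Type*} [TopologicalSpace X] {v : ℕ → X} {u : X}
    (h : ∃ᶠ n in atTop, v n = u) : MapClusterPt u atTop v :=
  mapClusterPt_iff_frequently.2 fun _ hs => h.mono fun _ hn => hn ▸ mem_of_mem_nhds hs

/-- **Theorem 3.** An infinite path in the Farey graph converges in `ℝ∞` if and only if
it does not return to two distinct vertices infinitely often. -/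
theorem stmt5 (v : ℕ → OnePoint ℝ) (hv : ∀ n : ℕ, FareyAdj (v n) (v (n + 1))) :
    (∃ L : OnePoint ℝ, Filter.Tendsto v Filter.atTop (nhds L)) ↔
      ¬ ∃ u w : OnePoint ℝ, IsExtRat u ∧ IsExtRat w ∧ u ≠ w ∧
        {n : ℕ | v n = u}.Infinite ∧ {n : ℕ | v n = w}.Infinite := by
  simp only [← Nat.frequently_atTop_iff_infinite]
  constructor
  · rintro ⟨L, hL⟩ ⟨u, w, -, -, huw, hu, hw⟩
    exact huw ((tendsto_nhds_unique_of_frequently_eq hL tendsto_const_nhds hu).symm.trans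
      (tendsto_nhds_unique_of_frequently_eq hL tendsto_const_nhds hw))
  · intro hno
    by_contra hconv
    obtain ⟨L, hL⟩ := exists_clusterPt_of_compactSpace (map v atTop)
    obtain ⟨M, hM, hML⟩ : ∃ M, MapClusterPt M atTop v ∧ M ≠ L := by
      by_contra! h
      exact hconv ⟨L, tendsto_nhds_of_unique_mapClusterPt h⟩
    obtain ⟨u, huL, hu⟩ := exists_frequently_eq_ne_of_mapClusterPt hv hM hL hML
    obtain ⟨w, hwu, hw⟩ :=
      exists_frequently_eq_ne_of_mapClusterPt hv hL (mapClusterPt_of_frequently_eq hu) huL.symm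
    have hrat {z : OnePoint ℝ} (hz : ∃ᶠ n in atTop, v n = z) : IsExtRat z := by
      obtain ⟨n, rfl⟩ := hz.exists
      exact (hv n).isExtRat
    exact hno ⟨w, u, hrat hw, hrat hu, hwu, hw, hu⟩
end
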